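/- arXiv:1612.04740 — 2 statements merged into one kernel-verified Lean document; each statement's English description precedes it below -/
import Mathlib

section
/- Let τ¹, τ² ∈ T_n be segmentations with D_{τ¹} = D_{τ²} and (1/n) d∞^{(1)}(τ¹,τ²) < Λ̲_{τ¹}/2. Then d_F(τ¹,τ²)² ≤ (12 D_{τ¹} / Λ̲_{τ¹}) · (1/n) d∞^{(1)}(τ¹,τ²). -/
open MeasureTheory ProbabilityTheory

/-- A segmentation of `{1, …, n}` with `D` segments: integers
`0 = t 0 < t 1 < ⋯ < t D = n`. -/
structure Seg (n : ℕ) where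
  D : ℕ
  t : ℕ → ℕ
  hD : 0 < D
  h0 : t 0 = 0
  hn : t D = n
  hmono : ∀ ℓ < D, t ℓ < t (ℓ + 1)

namespace Seg

variable {n : ℕ}

/-- The `ℓ`-th segment (`0`-based) of a segmentation, as a set of `0`-based indices:
it corresponds to the paper's segment `λ_{ℓ+1} = {t ℓ + 1, …, t (ℓ+1)}` (1-based). -/
def seg (τ : Seg n) (ℓ : ℕ) : Finset (Fin n) :=
  Finset.univ.filter fun j => τ.t ℓ ≤ (j : ℕ) ∧ (j : ℕ) < τ.t (ℓ + 1)

/-- `Λ̲_τ`: normalized size of the smallest segment. -/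
noncomputable def lamMin (τ : Seg n) : ℝ :=
  (((Finset.range τ.D).inf' (Finset.nonempty_range_iff.mpr τ.hD.ne')
      fun ℓ => τ.t (ℓ + 1) - τ.t ℓ : ℕ) : ℝ) / n

/-- `Λ̄_τ`: normalized size of the largest segment. -/
noncomputable def lamMax (τ : Seg n) : ℝ :=
  (((Finset.range τ.D).sup' (Finset.nonempty_range_iff.mpr τ.hD.ne')
      fun ℓ => τ.t (ℓ + 1) - τ.t ℓ : ℕ) : ℝ) / n

/-- `d∞^{(1)}(τ¹,τ²) = max_{1 ≤ i ≤ D₁−1} min_{1 ≤ j ≤ D₂−1} |τ¹_i − τ²_j|`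
(with natural conventions in the degenerate cases where a segmentation has no
interior change-point). -/
noncomputable def dinf1 (τ1 τ2 : Seg n) : ℕ :=
  if h : 2 ≤ τ1.D ∧ 2 ≤ τ2.D then
    (Finset.Ioo 0 τ1.D).sup fun i =>
      (Finset.Ioo 0 τ2.D).inf' ⟨1, Finset.mem_Ioo.mpr ⟨Nat.one_pos, by omega⟩⟩
        fun j => Nat.dist (τ1.t i) (τ2.t j)
  else if τ1.D = τ2.D then 0 else n

/-- `d∞^{(2)}(τ¹,τ²) = max_{1 ≤ i ≤ D₁−1} min_{0 ≤ j ≤ D₂} |τ¹_i − τ²_j|`. -/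
noncomputable def dinf2 (τ1 τ2 : Seg n) : ℕ :=
  (Finset.Ioo 0 τ1.D).sup fun i =>
    (Finset.Icc 0 τ2.D).inf' ⟨0, Finset.mem_Icc.mpr ⟨le_rfl, Nat.zero_le _⟩⟩
      fun j => Nat.dist (τ1.t i) (τ2.t j)

/-- `d∞^{(3)}(τ¹,τ²) = max_{1 ≤ i ≤ D₁−1} |τ¹_i − τ²_i|` (meaningful when `D₁ = D₂`). -/
noncomputable def dinf3 (τ1 τ2 : Seg n) : ℕ :=
  (Finset.Ioo 0 τ1.D).sup fun i => Nat.dist (τ1.t i) (τ2.t i)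

/-- `d_H^{(1)}`. -/
noncomputable def dH1 (τ1 τ2 : Seg n) : ℕ := max (dinf1 τ1 τ2) (dinf1 τ2 τ1)

/-- `d_H^{(2)}`. -/
noncomputable def dH2 (τ1 τ2 : Seg n) : ℕ := max (dinf2 τ1 τ2) (dinf2 τ2 τ1)

/-- The matrix of the orthogonal projection `Π_τ`:
`(Π_τ)_{ij} = 1/|λ|` if `i, j` are in the same segment `λ` of `τ`, and `0` otherwise. -/
noncomputable def Pmat (τ : Seg n) : Fin n → Fin n → ℝ := fun i j =>
  ∑ ℓ ∈ Finset.range τ.D, if i ∈ τ.seg ℓ ∧ j ∈ τ.seg ℓ then ((τ.seg ℓ).card : ℝ)⁻¹ else 0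

/-- The Frobenius loss `d_F(τ¹,τ²) = ‖Π_{τ¹} − Π_{τ²}‖_F`. -/
noncomputable def dF (τ1 τ2 : Seg n) : ℝ :=
  Real.sqrt (∑ i, ∑ j, (Pmat τ1 i j - Pmat τ2 i j) ^ 2)

/-- The orthogonal projection `Π_τ : H^n → H^n` onto vectors constant on each segment
of `τ`: `(Π_τ x)_i` is the average of `x` over the segment of `τ` containing `i`. -/
noncomputable def proj {H : Type*} [AddCommGroup H] [Module ℝ H]
    (τ : Seg n) (x : Fin n → H) : Fin n → H := fun i =>
  ∑ ℓ ∈ Finset.range τ.D,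
    if τ.t ℓ ≤ (i : ℕ) ∧ (i : ℕ) < τ.t (ℓ + 1)
    then (((τ.t (ℓ + 1) - τ.t ℓ : ℕ) : ℝ))⁻¹ • ∑ j ∈ τ.seg ℓ, x j
    else 0

end Seg

/-- Squared norm on `H^n`: `‖x‖² = Σ_i ‖x_i‖²`. -/
noncomputable def hnorm2 {n : ℕ} {H : Type*} [NormedAddCommGroup H] (x : Fin n → H) : ℝ :=
  ∑ i, ‖x i‖ ^ 2

/-- Inner product on `H^n`: `⟨x, y⟩ = Σ_i ⟨x_i, y_i⟩_H`. -/
noncomputable def hinner {n : ℕ} {H : Type*} [NormedAddCommGroup H] [InnerProductSpace ℝ H]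
    (x y : Fin n → H) : ℝ := ∑ i, inner ℝ (x i) (y i)

/-- `τ` is the true segmentation of `m ∈ H^n`: `m` is constant on every segment of `τ`
and jumps at every interior change-point of `τ`. -/
def IsTrueSeg {n : ℕ} {H : Type*} (τ : Seg n) (m : Fin n → H) : Prop :=
  (∀ ℓ < τ.D, ∀ i ∈ τ.seg ℓ, ∀ j ∈ τ.seg ℓ, m i = m j) ∧
  ∀ ℓ, 0 < ℓ → ℓ < τ.D → ∀ (h1 : τ.t ℓ - 1 < n) (h2 : τ.t ℓ < n),
    m ⟨τ.t ℓ - 1, h1⟩ ≠ m ⟨τ.t ℓ, h2⟩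

/-- The size `‖μ*_{t ℓ + 1} − μ*_{t ℓ}‖` (paper indexing) of the jump of `m` at
the change-point `t ℓ` of `τ`. -/
noncomputable def jumpAt {n : ℕ} {H : Type*} [NormedAddCommGroup H]
    (τ : Seg n) (m : Fin n → H) (ℓ : ℕ) : ℝ :=
  if h : 0 < τ.t ℓ ∧ τ.t ℓ < n then ‖m ⟨τ.t ℓ, h.2⟩ - m ⟨τ.t ℓ - 1, by omega⟩‖ else 0

/-- `Δ̲`: size of the smallest jump of `m` (over the change-points of `τ`). -/
noncomputable def deltaMin {n : ℕ} {H : Type*} [NormedAddCommGroup H]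
    (τ : Seg n) (m : Fin n → H) : ℝ :=
  if h : 2 ≤ τ.D then
    (Finset.Ioo 0 τ.D).inf' ⟨1, Finset.mem_Ioo.mpr ⟨Nat.one_pos, by omega⟩⟩ (jumpAt τ m)
  else 0

/-- `Δ̄`: size of the largest jump of `m` (over the change-points of `τ`). -/
noncomputable def deltaMax {n : ℕ} {H : Type*} [NormedAddCommGroup H]
    (τ : Seg n) (m : Fin n → H) : ℝ :=
  if h : 2 ≤ τ.D then
    (Finset.Ioo 0 τ.D).sup' ⟨1, Finset.mem_Ioo.mpr ⟨Nat.one_pos, by omega⟩⟩ (jumpAt τ m)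
  else 0

/-- The value of `m` at the first index of the `ℓ`-th segment of `τ`; if `m` is constant
on each segment of `τ`, this is the common value `μ*_{λ_ℓ}` of `m` on that segment. -/
noncomputable def segVal {n : ℕ} {H : Type*} [AddCommGroup H]
    (τ : Seg n) (m : Fin n → H) (ℓ : ℕ) : H :=
  if h : τ.t ℓ < n then m ⟨τ.t ℓ, h⟩ else 0

/-- `M_n = max_{1 ≤ k ≤ n} ‖ε_1 + ⋯ + ε_k‖` (the value at `k = 0` is `0`, which does not
affect the maximum). -/
noncomputable def Mmax {n : ℕ} {H : Type*} [NormedAddCommGroup H] (ε : Fin n → H) : ℝ :=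
  (Finset.range (n + 1)).sup' (Finset.nonempty_range_iff.mpr (Nat.succ_ne_zero n))
    fun k => ‖∑ j ∈ Finset.univ.filter (fun j : Fin n => (j : ℕ) < k), ε j‖

/-!
Expanding the square gives `d_F² = D₁ + D₂ − 2 Σ_{ℓ,m} |λ¹_ℓ ∩ λ²_m|² / (|λ¹_ℓ| |λ²_m|)`, and
dropping the off-diagonal terms bounds it by `Σ_ℓ (2 − 2 |λ¹_ℓ ∩ λ²_ℓ|² / (|λ¹_ℓ| |λ²_ℓ|))`.
Since the segments of `τ¹` are longer than `2 d∞^{(1)}` and `D_{τ¹} = D_{τ²}`, the `ℓ`-th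
change-points of `τ¹` and `τ²` are within `d∞^{(1)}` of each other. Hence `λ¹_ℓ ∩ λ²_ℓ` misses
at most `2 d∞^{(1)}` points of `λ¹_ℓ`, `λ²_ℓ` is at most `2 d∞^{(1)}` longer than `λ¹_ℓ`, and the
`ℓ`-th term is at most `12 d∞^{(1)} / |λ¹_ℓ| ≤ 12 d∞^{(1)} / (n Λ̲_{τ¹})`.
-/

open Finset

theorem Fin.card_filter_le_val_lt (n a b : ℕ) (hb : b ≤ n) :
    #{j : Fin n | a ≤ (j : ℕ) ∧ (j : ℕ) < b} = b - a := by
  rw [← Nat.card_Ico, ← card_attachFin (Ico a b) fun m hm => (mem_Ico.1 hm).2.trans_le hb]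
  congr 1
  ext j
  simp

theorem sum_sum_ite_mul_ite {ι R : Type*} [Fintype ι] [DecidableEq ι] [CommSemiring R]
    (s t : Finset ι) (x y : R) :
    ∑ i, ∑ j, (if i ∈ s ∧ j ∈ s then x else 0) * (if i ∈ t ∧ j ∈ t then y else 0)
      = #(s ∩ t) ^ 2 * (x * y) := by
  have h : ∀ i j, (if i ∈ s ∧ j ∈ s then x else 0) * (if i ∈ t ∧ j ∈ t then y else 0)
      = (if i ∈ s ∩ t then 1 else 0) * (if j ∈ s ∩ t then 1 else 0) * (x * y) := by
    intro i j
    simp only [mem_inter]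
    split_ifs <;> simp_all
  simp only [h, ← sum_mul, ← mul_sum, sum_boole, filter_mem_eq_inter, univ_inter]
  ring

theorem StrictMonoOn.eqOn_id {α : Type*} [LinearOrder α] {s : Set α} (hs : s.Finite)
    {f : α → α} (hf : StrictMonoOn f s) (hmaps : Set.MapsTo f s s) : Set.EqOn f id s := by
  have := hs.to_subtype
  intro x hx
  have : StrictMono (hmaps.restrict f s s) := fun a b hab => hf a.2 b.2 hab
  exact congrArg Subtype.val (this.apply_eq (x := ⟨x, hx⟩))

theorem two_sub_two_mul_sq_div_le {A B C d : ℝ} (hd : 0 ≤ d) (hA : 2 * d < A)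
    (hC : A - 2 * d ≤ C) (hB : 0 < B) (hBA : B ≤ A + 2 * d) :
    2 - 2 * (C ^ 2 / (A * B)) ≤ 12 * d / A := by
  have hA0 : 0 < A := by linarith
  have hC2 : (A - 2 * d) ^ 2 ≤ C ^ 2 := pow_le_pow_left₀ (by linarith) hC 2
  have key : A * B - C ^ 2 ≤ 6 * d * B := by
    rcases le_or_gt A (6 * d) with h6 | h6
    · nlinarith
    · nlinarith [mul_le_mul_of_nonneg_right hBA (by linarith : 0 ≤ A - 6 * d)]
  have hB0 : B ≠ 0 := hB.ne'
  calc 2 - 2 * (C ^ 2 / (A * B)) = 2 * (A * B - C ^ 2) / (A * B) := by field_simp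
    _ ≤ 2 * (6 * d * B) / (A * B) := by gcongr
    _ = 12 * d / A := by field_simp; ring

namespace Seg

variable {n : ℕ}

theorem strictMonoOn_t (τ : Seg n) : StrictMonoOn τ.t (Set.Iic τ.D) :=
  strictMonoOn_Iic_of_lt_succ fun m hm => by simpa using τ.hmono m hm

theorem t_le_t (τ : Seg n) {a b : ℕ} (hab : a ≤ b) (hb : b ≤ τ.D) : τ.t a ≤ τ.t b :=
  (τ.strictMonoOn_t.le_iff_le (hab.trans hb) hb).2 hab

theorem t_le (τ : Seg n) {b : ℕ} (hb : b ≤ τ.D) : τ.t b ≤ n := by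
  simpa only [τ.hn] using τ.t_le_t hb le_rfl

theorem n_pos (τ : Seg n) : 0 < n := by
  simpa only [τ.h0, τ.hn] using
    τ.strictMonoOn_t (Set.mem_Iic.2 (Nat.zero_le _)) (Set.mem_Iic.2 le_rfl) τ.hD

theorem card_seg (τ : Seg n) {ℓ : ℕ} (hℓ : ℓ < τ.D) : #(τ.seg ℓ) = τ.t (ℓ + 1) - τ.t ℓ :=
  Fin.card_filter_le_val_lt n _ _ (τ.t_le hℓ)

theorem card_seg_pos (τ : Seg n) {ℓ : ℕ} (hℓ : ℓ < τ.D) : 0 < #(τ.seg ℓ) := by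
  rw [τ.card_seg hℓ]
  exact Nat.sub_pos_of_lt (τ.hmono ℓ hℓ)

theorem card_seg_inter_seg (τ1 τ2 : Seg n) {ℓ : ℕ} (hℓ : ℓ < τ1.D) (m : ℕ) :
    #(τ1.seg ℓ ∩ τ2.seg m) = min (τ1.t (ℓ + 1)) (τ2.t (m + 1)) - max (τ1.t ℓ) (τ2.t m) := by
  have hmin : min (τ1.t (ℓ + 1)) (τ2.t (m + 1)) ≤ n :=
    (min_le_left _ _).trans (τ1.t_le (show ℓ + 1 ≤ τ1.D from hℓ))
  rw [← Fin.card_filter_le_val_lt n _ _ hmin]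
  congr 1
  ext j
  simp only [seg, mem_inter, mem_filter, mem_univ, true_and]
  omega

theorem disjoint_seg (τ : Seg n) {ℓ m : ℕ} (hℓ : ℓ < τ.D) (hm : m < τ.D) (hne : ℓ ≠ m) :
    Disjoint (τ.seg ℓ) (τ.seg m) := by
  rw [disjoint_iff_inter_eq_empty, ← card_eq_zero, card_seg_inter_seg τ τ hℓ]
  rcases Nat.lt_or_gt_of_ne hne with h | h
  · have := τ.t_le_t (show _ + 1 ≤ _ from h) hm.le
    omega
  · have := τ.t_le_t (show _ + 1 ≤ _ from h) hℓ.le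
    omega

/-- The Frobenius inner product of the blocks `λ¹_ℓ × λ¹_ℓ` and `λ²_m × λ²_m` of
`Π_{τ¹}` and `Π_{τ²}`. -/
noncomputable def overlap (τ1 τ2 : Seg n) (ℓ m : ℕ) : ℝ :=
  (#(τ1.seg ℓ ∩ τ2.seg m) : ℝ) ^ 2 / (#(τ1.seg ℓ) * #(τ2.seg m))

theorem overlap_nonneg (τ1 τ2 : Seg n) (ℓ m : ℕ) : 0 ≤ overlap τ1 τ2 ℓ m := by
  unfold overlap
  positivity

theorem sum_Pmat_mul_Pmat (τ1 τ2 : Seg n) :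
    ∑ i, ∑ j, Pmat τ1 i j * Pmat τ2 i j
      = ∑ ℓ ∈ range τ1.D, ∑ m ∈ range τ2.D, overlap τ1 τ2 ℓ m := by
  simp only [Pmat, sum_mul_sum, sum_comm (s := (univ : Finset (Fin n))) (t := range _)]
  refine sum_congr rfl fun ℓ _ => sum_congr rfl fun m _ => ?_
  rw [sum_sum_ite_mul_ite, overlap, div_eq_mul_inv, mul_inv]

theorem sum_overlap_self (τ : Seg n) :
    ∑ ℓ ∈ range τ.D, ∑ m ∈ range τ.D, overlap τ τ ℓ m = τ.D := by
  have hrow : ∀ ℓ ∈ range τ.D, ∑ m ∈ range τ.D, overlap τ τ ℓ m = 1 := by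
    intro ℓ hℓ
    rw [mem_range] at hℓ
    rw [sum_eq_single_of_mem ℓ (mem_range.2 hℓ) fun m hm hne => by
      simp [overlap, disjoint_iff_inter_eq_empty.1 (τ.disjoint_seg hℓ (mem_range.1 hm) hne.symm)]]
    have := τ.card_seg_pos hℓ
    simp only [overlap, inter_self]
    field_simp
  rw [sum_congr rfl hrow, sum_const, card_range, nsmul_one]

theorem dF_sq_eq (τ1 τ2 : Seg n) :
    dF τ1 τ2 ^ 2 = τ1.D + τ2.D - 2 * ∑ ℓ ∈ range τ1.D, ∑ m ∈ range τ2.D, overlap τ1 τ2 ℓ m := by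
  rw [dF, Real.sq_sqrt (by positivity), ← sum_Pmat_mul_Pmat, ← sum_overlap_self τ1,
    ← sum_overlap_self τ2, ← sum_Pmat_mul_Pmat, ← sum_Pmat_mul_Pmat, mul_sum]
  simp only [mul_sum, ← sum_add_distrib, ← sum_sub_distrib]
  congr! 2
  ring

theorem dF_sq_le_sum_two_sub_overlap (τ1 τ2 : Seg n) (hD : τ1.D = τ2.D) :
    dF τ1 τ2 ^ 2 ≤ ∑ ℓ ∈ range τ1.D, (2 - 2 * overlap τ1 τ2 ℓ ℓ) := by
  have hdiag : ∑ ℓ ∈ range τ1.D, overlap τ1 τ2 ℓ ℓ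
      ≤ ∑ ℓ ∈ range τ1.D, ∑ m ∈ range τ2.D, overlap τ1 τ2 ℓ m :=
    sum_le_sum fun ℓ hℓ => single_le_sum (fun m _ => overlap_nonneg τ1 τ2 ℓ m) (hD ▸ hℓ)
  rw [dF_sq_eq, sum_sub_distrib, sum_const, card_range, nsmul_eq_mul, ← mul_sum, ← hD]
  rw [← hD] at hdiag
  linarith

theorem exists_dist_le_dinf1 (τ1 τ2 : Seg n) (h2 : 2 ≤ τ2.D) {i : ℕ} (hi : i ∈ Ioo 0 τ1.D) :
    ∃ j ∈ Ioo 0 τ2.D, Nat.dist (τ1.t i) (τ2.t j) ≤ dinf1 τ1 τ2 := by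
  have h1 : 2 ≤ τ1.D := by
    have := mem_Ioo.1 hi
    omega
  obtain ⟨j, hj, hjmin⟩ := exists_mem_eq_inf' ⟨1, mem_Ioo.2 ⟨Nat.one_pos, h2⟩⟩
    fun j => Nat.dist (τ1.t i) (τ2.t j)
  refine ⟨j, hj, ?_⟩
  rw [dinf1, dif_pos ⟨h1, h2⟩, ← hjmin]
  exact le_sup (f := fun i => (Ioo 0 τ2.D).inf' _ fun j => Nat.dist (τ1.t i) (τ2.t j)) hi

/-- Because the segments of `τ¹` are longer than `2 d∞^{(1)}`, a choice of nearest change-point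
of `τ²` is strictly increasing in the index, so it maps `{1, …, D - 1}` onto itself identically. -/
theorem dist_t_le_dinf1 (τ1 τ2 : Seg n) (hD : τ1.D = τ2.D)
    (hgap : ∀ ℓ < τ1.D, 2 * dinf1 τ1 τ2 < τ1.t (ℓ + 1) - τ1.t ℓ) {i : ℕ} (hi : i ≤ τ1.D) :
    Nat.dist (τ1.t i) (τ2.t i) ≤ dinf1 τ1 τ2 := by
  rcases Nat.eq_zero_or_pos i with rfl | hi0
  · simp [τ1.h0, τ2.h0]
  rcases hi.eq_or_lt with rfl | hiD
  · rw [τ1.hn, hD, τ2.hn, Nat.dist_self]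
    exact Nat.zero_le _
  choose! σ hσ hσd using fun i (hi : i ∈ Ioo 0 τ1.D) =>
    exists_dist_le_dinf1 τ1 τ2 (by omega) hi
  have hmono : StrictMonoOn σ (Ioo 0 τ1.D : Set ℕ) := by
    intro a ha b hb hab
    have ha' := hσd a ha
    have hb' := hσd b hb
    have hgap_a := hgap a (mem_Ioo.1 ha).2
    have := τ1.t_le_t (show a + 1 ≤ b from hab) (mem_Ioo.1 hb).2.le
    by_contra! hle
    have := τ2.t_le_t hle (mem_Ioo.1 (hσ a ha)).2.le
    simp only [Nat.dist] at ha' hb'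
    omega
  have hmaps : Set.MapsTo σ (Ioo 0 τ1.D : Set ℕ) (Ioo 0 τ1.D : Set ℕ) := fun a ha => by
    simpa [hD] using hσ a ha
  have hid := hmono.eqOn_id (finite_toSet _) hmaps (mem_coe.2 (mem_Ioo.2 ⟨hi0, hiD⟩))
  simpa [hid] using hσd i (mem_Ioo.2 ⟨hi0, hiD⟩)

theorem two_sub_two_mul_overlap_le (τ1 τ2 : Seg n) {d ℓ : ℕ} (hℓ1 : ℓ < τ1.D) (hℓ2 : ℓ < τ2.D)
    (hgap : 2 * d < τ1.t (ℓ + 1) - τ1.t ℓ) (hleft : Nat.dist (τ1.t ℓ) (τ2.t ℓ) ≤ d)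
    (hright : Nat.dist (τ1.t (ℓ + 1)) (τ2.t (ℓ + 1)) ≤ d) :
    2 - 2 * overlap τ1 τ2 ℓ ℓ ≤ 12 * d / #(τ1.seg ℓ) := by
  have hA := τ1.card_seg hℓ1
  have hB := τ2.card_seg hℓ2
  have hC := card_seg_inter_seg τ1 τ2 hℓ1 ℓ
  have hB0 := τ2.card_seg_pos hℓ2
  simp only [Nat.dist] at hleft hright
  have hgapA : 2 * d < #(τ1.seg ℓ) := by omega
  have hCA : #(τ1.seg ℓ) ≤ #(τ1.seg ℓ ∩ τ2.seg ℓ) + 2 * d := by omega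
  have hBA : #(τ2.seg ℓ) ≤ #(τ1.seg ℓ) + 2 * d := by omega
  refine two_sub_two_mul_sq_div_le (Nat.cast_nonneg d) (by exact_mod_cast hgapA) ?_
    (by exact_mod_cast hB0) (by exact_mod_cast hBA)
  rw [sub_le_iff_le_add]
  exact_mod_cast hCA

theorem lamMin_pos (τ : Seg n) : 0 < τ.lamMin :=
  div_pos (Nat.cast_pos.2 ((lt_inf'_iff _).2 fun ℓ hℓ =>
    Nat.sub_pos_of_lt (τ.hmono ℓ (mem_range.1 hℓ)))) (Nat.cast_pos.2 τ.n_pos)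

theorem natCast_mul_lamMin_le_card_seg (τ : Seg n) {ℓ : ℕ} (hℓ : ℓ < τ.D) :
    n * τ.lamMin ≤ #(τ.seg ℓ) := by
  rw [lamMin, mul_div_cancel₀ _ (Nat.cast_ne_zero.2 τ.n_pos.ne'), τ.card_seg hℓ, Nat.cast_le]
  exact inf'_le _ (mem_range.2 hℓ)

theorem two_mul_lt_sub_t_of_div_lt_half_lamMin (τ : Seg n) {k : ℕ}
    (hk : (k : ℝ) / n < τ.lamMin / 2) {ℓ : ℕ} (hℓ : ℓ < τ.D) :
    2 * k < τ.t (ℓ + 1) - τ.t ℓ := by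
  have hn : (0 : ℝ) < n := Nat.cast_pos.2 τ.n_pos
  have := τ.natCast_mul_lamMin_le_card_seg hℓ
  rw [div_lt_iff₀ hn] at hk
  rw [← τ.card_seg hℓ, ← Nat.cast_lt (α := ℝ)]
  push_cast
  nlinarith

end Seg

/-- Proposition 3.5, upper bound: if `D_{τ¹} = D_{τ²}` and
`(1/n) d∞^{(1)}(τ¹,τ²) < Λ̲_{τ¹}/2`, then
`d_F(τ¹,τ²)² ≤ (12 D_{τ¹} / Λ̲_{τ¹}) · (1/n) d∞^{(1)}(τ¹,τ²)`. -/
theorem dF_sq_le_dinf1 {n : ℕ} (τ1 τ2 : Seg n) (hD : τ1.D = τ2.D)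
    (h : (Seg.dinf1 τ1 τ2 : ℝ) / n < Seg.lamMin τ1 / 2) :
    (Seg.dF τ1 τ2) ^ 2
      ≤ 12 * (τ1.D : ℝ) / Seg.lamMin τ1 * ((Seg.dinf1 τ1 τ2 : ℝ) / n) := by
  set d := Seg.dinf1 τ1 τ2
  have hgap : ∀ ℓ < τ1.D, 2 * d < τ1.t (ℓ + 1) - τ1.t ℓ := fun ℓ hℓ =>
    τ1.two_mul_lt_sub_t_of_div_lt_half_lamMin h hℓ
  have hn : (0 : ℝ) < n := Nat.cast_pos.2 τ1.n_pos
  have hL := τ1.lamMin_pos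
  have hseg : ∀ ℓ ∈ range τ1.D, 2 - 2 * Seg.overlap τ1 τ2 ℓ ℓ ≤ 12 * d / (n * τ1.lamMin) := by
    intro ℓ hℓ
    rw [mem_range] at hℓ
    refine (Seg.two_sub_two_mul_overlap_le τ1 τ2 hℓ (hD ▸ hℓ) (hgap ℓ hℓ)
      (Seg.dist_t_le_dinf1 τ1 τ2 hD hgap hℓ.le) (Seg.dist_t_le_dinf1 τ1 τ2 hD hgap hℓ)).trans ?_
    gcongr
    exact τ1.natCast_mul_lamMin_le_card_seg hℓ
  calc Seg.dF τ1 τ2 ^ 2 ≤ ∑ ℓ ∈ range τ1.D, (2 - 2 * Seg.overlap τ1 τ2 ℓ ℓ) :=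
        Seg.dF_sq_le_sum_two_sub_overlap τ1 τ2 hD
    _ ≤ ∑ _ℓ ∈ range τ1.D, 12 * d / (n * τ1.lamMin) := sum_le_sum hseg
    _ = 12 * (τ1.D : ℝ) / τ1.lamMin * (d / n) := by
        rw [sum_const, card_range, nsmul_eq_mul]
        field_simp
end

section
/- Let μ* ∈ H^n be non-constant with true segmentation τ*, and let τ ∈ T_n be any segmentation with D_τ < D_{τ*}. Then (1/n)‖μ* − Π_τ μ*‖² ≥ (1/2) Λ̲_{τ*} Δ̲². -/
open MeasureTheory ProbabilityTheory

/-!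
Let `m = n Λ̲_{τ*}` be the length of the shortest segment of `τ*`. If a window `[c - r, c + r)`
around a change-point `c` of `τ*`, with `r ≤ m`, lies inside one segment of `τ`, then `Π_τ μ*` is a
single vector `C` there while `μ*` takes two values `u`, `w` with `‖u - w‖ ≥ Δ̲`, so the residual on
the window is at least `r (‖u - C‖² + ‖w - C‖²) ≥ (r / 2) Δ̲²`.

Send each interior change-point of `τ*` to its nearest change-point of `τ`. If one of them is at
distance at least `m`, take `r = m`. Otherwise every nearest change-point is interior to `τ`, which has
fewer interior change-points than `τ*`, so two change-points `c < c'` of `τ*` share one, `s`. Since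
`c' - c ≥ m`, `c < s < c'`, and the windows of radii `s - c` and `c' - s` are disjoint with radii
summing to at least `m`.
-/

open Finset

def finIco (n a b : ℕ) : Finset (Fin n) :=
  univ.filter fun i => a ≤ (i : ℕ) ∧ (i : ℕ) < b

section finIco

variable {n a b c : ℕ}

@[simp]
theorem mem_finIco {i : Fin n} : i ∈ finIco n a b ↔ a ≤ (i : ℕ) ∧ (i : ℕ) < b := by
  simp [finIco]

theorem card_finIco (hb : b ≤ n) : #(finIco n a b) = b - a := by
  have : finIco n a b = (Ico a b).attachFin fun m hm => (mem_Ico.mp hm).2.trans_le hb := by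
    ext i
    simp
  rw [this, card_attachFin, Nat.card_Ico]

theorem finIco_union (hab : a ≤ b) (hbc : b ≤ c) :
    finIco n a b ∪ finIco n b c = finIco n a c := by
  ext i
  simp only [mem_union, mem_finIco]
  omega

theorem disjoint_finIco {d : ℕ} (hbc : b ≤ c) : Disjoint (finIco n a b) (finIco n c d) := by
  rw [disjoint_left]
  intro i hi hi'
  rw [mem_finIco] at hi hi'
  omega

end finIco

theorem Finset.exists_lt_map_eq_of_card_lt_of_maps_to {α β : Type*} [LinearOrder α]
    {s : Finset α} {t : Finset β} (hc : #t < #s) {f : α → β} (hf : ∀ a ∈ s, f a ∈ t) :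
    ∃ a ∈ s, ∃ b ∈ s, a < b ∧ f a = f b := by
  obtain ⟨a, ha, b, hb, hab, hfab⟩ := exists_ne_map_eq_of_card_lt_of_maps_to hc hf
  rcases hab.lt_or_gt with h | h
  · exact ⟨a, ha, b, hb, h, hfab⟩
  · exact ⟨b, hb, a, ha, h, hfab.symm⟩

namespace Seg

variable {n : ℕ} (τ : Seg n)

theorem t_strictMonoOn : StrictMonoOn τ.t (Set.Iic τ.D) :=
  strictMonoOn_Iic_of_lt_succ fun m hm => by simpa using τ.hmono m hm

theorem t_le_t_s11 {i j : ℕ} (hij : i ≤ j) (hj : j ≤ τ.D) : τ.t i ≤ τ.t j :=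
  τ.t_strictMonoOn.monotoneOn (Set.mem_Iic.mpr (hij.trans hj)) hj hij

theorem t_lt_t {i j : ℕ} (hij : i < j) (hj : j ≤ τ.D) : τ.t i < τ.t j :=
  τ.t_strictMonoOn (Set.mem_Iic.mpr (hij.le.trans hj)) hj hij

theorem t_le_n {i : ℕ} (hi : i ≤ τ.D) : τ.t i ≤ n :=
  (τ.t_le_t_s11 hi le_rfl).trans_eq τ.hn

@[simp]
theorem mem_seg {ℓ : ℕ} {i : Fin n} : i ∈ τ.seg ℓ ↔ τ.t ℓ ≤ (i : ℕ) ∧ (i : ℕ) < τ.t (ℓ + 1) := by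
  simp [seg]

theorem exists_mem_seg {x : ℕ} (hx : x < n) : ∃ ℓ < τ.D, τ.t ℓ ≤ x ∧ x < τ.t (ℓ + 1) := by
  have hlast : x < τ.t (τ.D - 1 + 1) := by rwa [Nat.sub_add_cancel τ.hD, τ.hn]
  have hP : ∃ ℓ, x < τ.t (ℓ + 1) := ⟨_, hlast⟩
  refine ⟨Nat.find hP, Nat.lt_of_le_sub_one τ.hD (Nat.find_min' hP hlast), ?_, Nat.find_spec hP⟩
  rcases h : Nat.find hP with _ | ℓ
  · simp [τ.h0]
  · exact not_lt.mp (Nat.find_min hP (h ▸ Nat.lt_succ_self ℓ))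

theorem eq_of_mem_seg {ℓ ℓ' x : ℕ} (hℓ : ℓ < τ.D) (hℓ' : ℓ' < τ.D)
    (h : τ.t ℓ ≤ x ∧ x < τ.t (ℓ + 1)) (h' : τ.t ℓ' ≤ x ∧ x < τ.t (ℓ' + 1)) : ℓ = ℓ' := by
  by_contra hne
  rcases Nat.lt_or_gt_of_ne hne with hlt | hlt
  · have := τ.t_le_t_s11 (i := ℓ + 1) hlt hℓ'.le
    omega
  · have := τ.t_le_t_s11 (i := ℓ' + 1) hlt hℓ.le
    omega

theorem exists_seg_of_le_dist {c r : ℕ} (hc : c < n) (hr : ∀ j ≤ τ.D, r ≤ Nat.dist c (τ.t j)) :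
    ∃ j < τ.D, τ.t j + r ≤ c ∧ c + r ≤ τ.t (j + 1) := by
  obtain ⟨j, hj, h1, h2⟩ := τ.exists_mem_seg hc
  have d1 := hr j hj.le
  have d2 := hr (j + 1) hj
  unfold Nat.dist at d1 d2
  exact ⟨j, hj, by omega, by omega⟩

theorem exists_nearest_cut (c : ℕ) :
    ∃ j ≤ τ.D, ∀ j' ≤ τ.D, Nat.dist c (τ.t j) ≤ Nat.dist c (τ.t j') := by
  obtain ⟨j, hj, hmin⟩ :=
    (range (τ.D + 1)).exists_min_image (fun j => Nat.dist c (τ.t j)) ⟨0, by simp⟩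
  exact ⟨j, Nat.lt_succ_iff.mp (mem_range.mp hj),
    fun j' hj' => hmin j' (mem_range.mpr (Nat.lt_succ_of_le hj'))⟩

def minLen : ℕ :=
  (range τ.D).inf' (nonempty_range_iff.mpr τ.hD.ne') fun ℓ => τ.t (ℓ + 1) - τ.t ℓ

theorem lamMin_eq : τ.lamMin = τ.minLen / n := rfl

theorem t_add_minLen_le {i j : ℕ} (hij : i < j) (hj : j ≤ τ.D) : τ.t i + τ.minLen ≤ τ.t j := by
  have hlen : τ.minLen ≤ τ.t (i + 1) - τ.t i := inf'_le _ (mem_range.mpr (hij.trans_le hj))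
  have := τ.t_le_t_s11 (i := i + 1) hij hj
  have := τ.hmono i (hij.trans_le hj)
  omega

theorem mem_Ioo_of_dist_lt_minLen (σ : Seg n) {k j : ℕ} (hk0 : 0 < k) (hk : k < τ.D)
    (hj : j ≤ σ.D) (hd : Nat.dist (τ.t k) (σ.t j) < τ.minLen) : j ∈ Ioo 0 σ.D := by
  have h0 := τ.t_add_minLen_le hk0 hk.le
  have hD := τ.t_add_minLen_le hk le_rfl
  rw [τ.h0] at h0
  rw [τ.hn] at hD
  refine mem_Ioo.mpr ⟨Nat.pos_of_ne_zero ?_, hj.lt_of_ne ?_⟩ <;> rintro rfl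
  · rw [σ.h0, Nat.dist] at hd
    omega
  · rw [σ.hn, Nat.dist] at hd
    omega

section proj

variable {H : Type*} [NormedAddCommGroup H] [Module ℝ H]

theorem proj_apply_of_mem_seg (x : Fin n → H) {ℓ : ℕ} (hℓ : ℓ < τ.D) {i : Fin n}
    (hi : i ∈ τ.seg ℓ) :
    τ.proj x i = (((τ.t (ℓ + 1) - τ.t ℓ : ℕ) : ℝ))⁻¹ • ∑ j ∈ τ.seg ℓ, x j := by
  rw [mem_seg] at hi
  unfold proj
  rw [sum_eq_single_of_mem ℓ (mem_range.mpr hℓ), if_pos hi]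
  intro ℓ' hℓ' hne
  rw [if_neg fun h' => hne (τ.eq_of_mem_seg (mem_range.mp hℓ') hℓ h' hi)]

/-- Residual sum of squares of `x` over `S`. -/
noncomputable def rss (x : Fin n → H) (S : Finset (Fin n)) : ℝ :=
  ∑ i ∈ S, ‖x i - τ.proj x i‖ ^ 2

theorem rss_le_hnorm2 (x : Fin n → H) (S : Finset (Fin n)) :
    τ.rss x S ≤ hnorm2 (fun i => x i - τ.proj x i) :=
  sum_le_sum_of_subset_of_nonneg (subset_univ S) fun _ _ _ => by positivity

theorem rss_union (x : Fin n → H) {S T : Finset (Fin n)} (h : Disjoint S T) :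
    τ.rss x (S ∪ T) = τ.rss x S + τ.rss x T :=
  sum_union h

theorem rss_finIco_of_const (x : Fin n → H) {a b : ℕ} (hb : b ≤ n) {u C : H}
    (hu : ∀ i ∈ finIco n a b, x i = u) (hC : ∀ i ∈ finIco n a b, τ.proj x i = C) :
    τ.rss x (finIco n a b) = ((b - a : ℕ) : ℝ) * ‖u - C‖ ^ 2 := by
  unfold rss
  rw [sum_congr rfl fun i hi => by rw [hu i hi, hC i hi], sum_const, card_finIco hb,
    nsmul_eq_mul]

theorem mul_norm_sub_sq_le_rss (x : Fin n → H) {c r j : ℕ} (hj : j < τ.D)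
    (h1 : τ.t j + r ≤ c) (h2 : c + r ≤ τ.t (j + 1)) {u w : H}
    (hu : ∀ i : Fin n, c - r ≤ (i : ℕ) → (i : ℕ) < c → x i = u)
    (hw : ∀ i : Fin n, c ≤ (i : ℕ) → (i : ℕ) < c + r → x i = w) :
    (r : ℝ) / 2 * ‖u - w‖ ^ 2 ≤ τ.rss x (finIco n (c - r) (c + r)) := by
  set C := (((τ.t (j + 1) - τ.t j : ℕ) : ℝ))⁻¹ • ∑ i ∈ τ.seg j, x i
  have hn : c + r ≤ n := h2.trans (τ.t_le_n hj)
  have hC : ∀ i ∈ finIco n (c - r) (c + r), τ.proj x i = C := fun i hi =>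
    τ.proj_apply_of_mem_seg x hj (by rw [mem_finIco] at hi; rw [mem_seg]; omega)
  rw [← finIco_union (by omega : c - r ≤ c) (by omega : c ≤ c + r),
    τ.rss_union x (disjoint_finIco le_rfl),
    τ.rss_finIco_of_const x (by omega) (fun i hi => hu i (mem_finIco.mp hi).1 (mem_finIco.mp hi).2)
      fun i hi => hC i (by rw [mem_finIco] at hi ⊢; omega),
    τ.rss_finIco_of_const x hn (fun i hi => hw i (mem_finIco.mp hi).1 (mem_finIco.mp hi).2)
      fun i hi => hC i (by rw [mem_finIco] at hi ⊢; omega),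
    Nat.sub_sub_self (by omega : r ≤ c), Nat.add_sub_cancel_left]
  have htri : ‖u - w‖ ≤ ‖u - C‖ + ‖w - C‖ := by
    simpa [norm_sub_rev C w] using norm_sub_le_norm_sub_add_norm_sub u C w
  calc (r : ℝ) / 2 * ‖u - w‖ ^ 2 ≤ r / 2 * (2 * (‖u - C‖ ^ 2 + ‖w - C‖ ^ 2)) := by
        gcongr
        exact (pow_le_pow_left₀ (norm_nonneg _) htri 2).trans add_sq_le
    _ = r * ‖u - C‖ ^ 2 + r * ‖w - C‖ ^ 2 := by ring

end proj

end Seg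

section deltaMin

variable {n : ℕ} {H : Type*} [NormedAddCommGroup H]

theorem deltaMin_nonneg (τ : Seg n) (m : Fin n → H) : 0 ≤ deltaMin τ m := by
  unfold deltaMin
  split_ifs
  · exact le_inf' _ _ fun ℓ _ => by unfold jumpAt; split_ifs <;> positivity
  · exact le_rfl

theorem deltaMin_le_norm_sub (τ : Seg n) (m : Fin n → H) {k : ℕ} (hk0 : 0 < k) (hk : k < τ.D)
    (hc : τ.t k < n) : deltaMin τ m ≤ ‖m ⟨τ.t k, hc⟩ - m ⟨τ.t k - 1, by omega⟩‖ := by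
  have hpos : 0 < τ.t k := τ.h0 ▸ τ.t_lt_t hk0 hk.le
  rw [deltaMin, dif_pos (by omega)]
  refine (inf'_le _ (mem_Ioo.mpr ⟨hk0, hk⟩)).trans_eq ?_
  rw [jumpAt, dif_pos ⟨hpos, hc⟩]

end deltaMin

namespace IsTrueSeg

variable {n : ℕ} {H : Type*} [NormedAddCommGroup H] [Module ℝ H] {τs : Seg n} {μ : Fin n → H}

theorem mul_deltaMin_sq_le_rss (hτs : IsTrueSeg τs μ) (τ : Seg n) {k r : ℕ} (hk0 : 0 < k)
    (hk : k < τs.D) (hr : r ≤ τs.minLen) (hfar : ∀ j ≤ τ.D, r ≤ Nat.dist (τs.t k) (τ.t j)) :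
    (r : ℝ) / 2 * deltaMin τs μ ^ 2 ≤ τ.rss μ (finIco n (τs.t k - r) (τs.t k + r)) := by
  have hleft := τs.t_add_minLen_le (Nat.sub_lt hk0 one_pos) hk.le
  have hright := τs.t_add_minLen_le (j := k + 1) (Nat.lt_succ_self k) hk
  have hc : τs.t k < n := (τs.hmono k hk).trans_le (τs.t_le_n hk)
  have hpos : 0 < τs.t k := τs.h0 ▸ τs.t_lt_t hk0 hk.le
  obtain ⟨j, hj, h1, h2⟩ := τ.exists_seg_of_le_dist hc hfar
  refine le_trans ?_ (τ.mul_norm_sub_sq_le_rss μ hj h1 h2 (u := μ ⟨τs.t k - 1, by omega⟩)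
    (w := μ ⟨τs.t k, hc⟩) (fun i hi1 hi2 => ?_) fun i hi1 hi2 => ?_)
  · rw [norm_sub_rev]
    gcongr
    exacts [deltaMin_nonneg τs μ, deltaMin_le_norm_sub τs μ hk0 hk hc]
  · refine hτs.1 (k - 1) (by omega) i ?_ _ ?_ <;>
      simp only [Seg.mem_seg, Nat.sub_add_cancel hk0] <;> omega
  · refine hτs.1 k hk i ?_ _ ?_ <;> simp only [Seg.mem_seg] <;> omega

theorem minLen_mul_deltaMin_sq_le_hnorm2 (hτs : IsTrueSeg τs μ) (τ : Seg n) {k k' j : ℕ}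
    (hk0 : 0 < k) (hkk' : k < k') (hk' : k' < τs.D)
    (hnear : ∀ j' ≤ τ.D, Nat.dist (τs.t k) (τ.t j) ≤ Nat.dist (τs.t k) (τ.t j'))
    (hnear' : ∀ j' ≤ τ.D, Nat.dist (τs.t k') (τ.t j) ≤ Nat.dist (τs.t k') (τ.t j'))
    (hd : Nat.dist (τs.t k) (τ.t j) < τs.minLen) (hd' : Nat.dist (τs.t k') (τ.t j) < τs.minLen) :
    (τs.minLen : ℝ) / 2 * deltaMin τs μ ^ 2 ≤ hnorm2 (fun i => μ i - τ.proj μ i) := by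
  have hgap := τs.t_add_minLen_le hkk' hk'.le
  have hdist : Nat.dist (τs.t k) (τ.t j) = τ.t j - τs.t k := by
    unfold Nat.dist at hd hd' ⊢; omega
  have hdist' : Nat.dist (τs.t k') (τ.t j) = τs.t k' - τ.t j := by
    unfold Nat.dist at hd hd' ⊢; omega
  rw [hdist] at hnear hd
  rw [hdist'] at hnear' hd'
  have hb := hτs.mul_deltaMin_sq_le_rss τ hk0 (hkk'.trans hk') hd.le hnear
  have hb' := hτs.mul_deltaMin_sq_le_rss τ (hk0.trans hkk') hk' hd'.le hnear'
  calc (τs.minLen : ℝ) / 2 * deltaMin τs μ ^ 2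
      ≤ ((τ.t j - τs.t k : ℕ) : ℝ) / 2 * deltaMin τs μ ^ 2
        + ((τs.t k' - τ.t j : ℕ) : ℝ) / 2 * deltaMin τs μ ^ 2 := by
        rw [← add_mul, ← add_div, ← Nat.cast_add]
        gcongr
        omega
    _ ≤ _ := add_le_add hb hb'
    _ = _ := (τ.rss_union μ (disjoint_finIco (by omega))).symm
    _ ≤ _ := τ.rss_le_hnorm2 μ _

end IsTrueSeg

theorem approx_error_lower_bound_general {H : Type*} [NormedAddCommGroup H] [InnerProductSpace ℝ H]
    {n : ℕ} (μs : Fin n → H) (τs : Seg n) (hτs : IsTrueSeg τs μs)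
    (τ : Seg n) (hτ : τ.D < τs.D) :
    (1 / n) * hnorm2 (fun i => μs i - Seg.proj τ μs i)
      ≥ (1 / 2) * Seg.lamMin τs * (deltaMin τs μs) ^ 2 := by
  suffices h : (τs.minLen : ℝ) / 2 * deltaMin τs μs ^ 2 ≤ hnorm2 (fun i => μs i - τ.proj μs i) by
    rw [ge_iff_le, Seg.lamMin_eq]
    calc 1 / 2 * ((τs.minLen : ℝ) / n) * deltaMin τs μs ^ 2
        = 1 / n * ((τs.minLen : ℝ) / 2 * deltaMin τs μs ^ 2) := by ring
      _ ≤ _ := by gcongr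
  choose g hg hnear using fun k => τ.exists_nearest_cut (τs.t k)
  by_cases hfar : ∃ k ∈ Ioo 0 τs.D, τs.minLen ≤ Nat.dist (τs.t k) (τ.t (g k))
  · obtain ⟨k, hk, hm⟩ := hfar
    rw [mem_Ioo] at hk
    exact (hτs.mul_deltaMin_sq_le_rss τ hk.1 hk.2 le_rfl fun j hj => hm.trans (hnear k j hj)).trans
      (τ.rss_le_hnorm2 μs _)
  push Not at hfar
  have hmaps : ∀ k ∈ Ioo 0 τs.D, g k ∈ Ioo 0 τ.D := fun k hk =>
    τs.mem_Ioo_of_dist_lt_minLen τ (mem_Ioo.mp hk).1 (mem_Ioo.mp hk).2 (hg k) (hfar k hk)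
  have hcard : #(Ioo 0 τ.D) < #(Ioo 0 τs.D) := by
    simp only [Nat.card_Ioo]
    have := τ.hD
    omega
  obtain ⟨k, hk, k', hk', hkk', hgk⟩ := exists_lt_map_eq_of_card_lt_of_maps_to hcard hmaps
  have hd := hfar k hk
  have hd' := hfar k' hk'
  rw [← hgk] at hd'
  rw [mem_Ioo] at hk hk'
  exact hτs.minLen_mul_deltaMin_sq_le_hnorm2 τ hk.1 hkk' hk'.2 (hnear k)
    (hgk ▸ hnear k') hd hd'

/-- Lemma 5.2: for any segmentation `τ` with fewer segments than the true
segmentation `τ*`, `(1/n)‖μ* − Π_τ μ*‖² ≥ (1/2) Λ̲_{τ*} Δ̲²`. -/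
theorem approx_error_lower_bound {H : Type*} [NormedAddCommGroup H] [InnerProductSpace ℝ H]
    {n : ℕ} (μs : Fin n → H) (τs : Seg n) (hτs : IsTrueSeg τs μs) (hDs : 2 ≤ τs.D)
    (τ : Seg n) (hτ : τ.D < τs.D) :
    (1 / n) * hnorm2 (fun i => μs i - Seg.proj τ μs i)
      ≥ (1 / 2) * Seg.lamMin τs * (deltaMin τs μs) ^ 2 :=
  approx_error_lower_bound_general μs τs hτs τ hτ
end
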